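/- Let G be a graph of order n without isolated vertices. Then γ_{×2R}(G) = 2n if and only if G is a disjoint union of ℓ copies of K_2 for some ℓ ≥ 1 (i.e., G is 1-regular). -/

import Mathlib

open Finset

/-- A Roman k-tuple dominating function: values in {0,1,2}; vertices with value 0
have at least k neighbors with value 2; vertices with nonzero value have at least
k-1 neighbors with value 2. -/
def IsRkTDF {V : Type*} (G : SimpleGraph V) (k : ℕ) (f : V → ℕ) : Prop :=
  (∀ v, f v ≤ 2) ∧
  (∀ v, f v = 0 → k ≤ {w | G.Adj v w ∧ f w = 2}.ncard) ∧
  (∀ v, f v ≠ 0 → k - 1 ≤ {w | G.Adj v w ∧ f w = 2}.ncard)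

/-- The Roman k-tuple domination number: minimum weight of a Roman k-tuple
dominating function. -/
noncomputable def romanKTDN {V : Type*} [Fintype V] (G : SimpleGraph V) (k : ℕ) : ℕ :=
  sInf {n | ∃ f : V → ℕ, IsRkTDF G k f ∧ ∑ v, f v = n}

/-- A k-tuple dominating set: every vertex has at least k members of S in its
closed neighborhood. -/
def IsKTupleDomSet {V : Type*} (G : SimpleGraph V) (k : ℕ) (S : Set V) : Prop :=
  ∀ v, k ≤ {w ∈ S | w = v ∨ G.Adj v w}.ncard

/-- The k-tuple domination number. -/
noncomputable def kTupleDomNum {V : Type*} (G : SimpleGraph V) (k : ℕ) : ℕ :=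
  sInf {n | ∃ S : Set V, IsKTupleDomSet G k S ∧ S.ncard = n}

/-!
The constant function 2 is always a Roman 2-tuple dominating function here, so the number is at
most `2n`. If some vertex `v` has degree at least 2, one value of it can be lowered: a pendant
neighbour of `v` to 1 if there is one, otherwise `v` itself to 0, which is then seen by at least
two neighbours of value 2. Conversely, in a 1-regular graph a vertex of value 0 cannot see two
2's, and a vertex of value 1 would leave its unique neighbour of value 2 without a 2 next to it,
so every such function is constant 2.
-/

namespace SimpleGraph

variable {V : Type*} [Fintype V] (G : SimpleGraph V) [DecidableRel G.Adj]

lemma ncard_neighborSet (v : V) : (G.neighborSet v).ncard = G.degree v := by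
  rw [Set.ncard_eq_toFinset_card', ← card_neighborFinset_eq_degree, neighborFinset]

lemma ncard_adj_and_le_degree (v : V) (P : V → Prop) :
    {w | G.Adj v w ∧ P w}.ncard ≤ G.degree v :=
  G.ncard_neighborSet v ▸ Set.ncard_le_ncard fun _ hw => hw.1

lemma ncard_adj_and_eq_degree {v : V} {P : V → Prop} (hP : ∀ w, G.Adj v w → P w) :
    {w | G.Adj v w ∧ P w}.ncard = G.degree v := by
  rw [← G.ncard_neighborSet v]
  congr 1
  ext w
  exact ⟨And.left, fun hw => ⟨hw, hP w hw⟩⟩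

variable {G}

lemma exists_adj_ne_of_one_lt_degree {u : V} (h : 1 < G.degree u) (x : V) :
    ∃ w, G.Adj u w ∧ w ≠ x := by
  rw [← card_neighborFinset_eq_degree] at h
  obtain ⟨w, hw, hwx⟩ := Finset.exists_mem_ne h x
  exact ⟨w, (G.mem_neighborFinset u w).mp hw, hwx⟩

lemma eq_of_adj_of_degree_eq_one {p u v : V} (hp : G.degree p = 1) (hu : G.Adj p u)
    (hv : G.Adj p v) : u = v :=
  (degree_eq_one_iff_existsUnique_adj.mp hp).unique hu hv

end SimpleGraph

open SimpleGraph

section RomanDomination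

variable {V : Type*} {G : SimpleGraph V} {k : ℕ} {f : V → ℕ}

lemma isRkTDF_two_iff [Finite V] :
    IsRkTDF G 2 f ↔ (∀ v, f v ≤ 2) ∧ (∀ v, f v = 0 → 2 ≤ {w | G.Adj v w ∧ f w = 2}.ncard) ∧
      (∀ v, f v ≠ 0 → ∃ w, G.Adj v w ∧ f w = 2) := by
  refine and_congr_right' (and_congr_right' (forall_congr' fun v => imp_congr_right fun _ => ?_))
  exact Set.ncard_pos

variable [Fintype V]

lemma romanKTDN_le (hf : IsRkTDF G k f) : romanKTDN G k ≤ ∑ v, f v :=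
  Nat.sInf_le ⟨f, hf, rfl⟩

lemma romanKTDN_eq_two_mul_card (hconst : IsRkTDF G k fun _ => 2)
    (huniq : ∀ f, IsRkTDF G k f → f = fun _ => 2) : romanKTDN G k = 2 * Fintype.card V := by
  have hsum : ∑ _v : V, 2 = 2 * Fintype.card V := by simp [mul_comm]
  refine le_antisymm (hsum ▸ romanKTDN_le hconst) (le_csInf ⟨_, _, hconst, rfl⟩ ?_)
  rintro _ ⟨f, hf, rfl⟩
  rw [huniq f hf, hsum]

lemma romanKTDN_lt_two_mul_card_of_update [DecidableEq V] {p : V} {a : ℕ} (ha : a < 2)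
    (hf : IsRkTDF G k (Function.update (fun _ => 2) p a)) :
    romanKTDN G k < 2 * Fintype.card V := by
  calc romanKTDN G k ≤ ∑ v, Function.update (fun _ => 2) p a v := romanKTDN_le hf
    _ < ∑ _v : V, 2 := Finset.sum_lt_sum
        (fun v _ => by rw [Function.update_apply]; split <;> omega) ⟨p, by simpa using ha⟩
    _ = 2 * Fintype.card V := by simp [mul_comm]

variable [DecidableRel G.Adj]

lemma isRkTDF_const_two (h : ∀ v, k - 1 ≤ G.degree v) : IsRkTDF G k fun _ => 2 :=
  ⟨fun _ => le_rfl, fun _ h0 => absurd h0 two_ne_zero, fun v _ =>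
    (G.ncard_adj_and_eq_degree (v := v) (P := fun _ => (2 : ℕ) = 2) fun _ _ => rfl) ▸ h v⟩

lemma IsRkTDF.ne_zero_of_degree_lt (hf : IsRkTDF G k f) {v : V} (hv : G.degree v < k) :
    f v ≠ 0 := fun h0 =>
  (hf.2.1 v h0).not_gt (hv.trans_le' (G.ncard_adj_and_le_degree v _))

lemma IsRkTDF.eq_two_of_isRegularOfDegree_one (hG : G.IsRegularOfDegree 1)
    (hf : IsRkTDF G 2 f) (v : V) : f v = 2 := by
  have hne (u : V) : f u ≠ 0 := hf.ne_zero_of_degree_lt (by rw [hG u]; norm_num)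
  obtain ⟨hle, -, hdom⟩ := isRkTDF_two_iff.mp hf
  by_contra hv2
  have hv1 : f v = 1 := by have := hle v; have := hne v; omega
  obtain ⟨w, hvw, hw⟩ := hdom v (hne v)
  obtain ⟨x, hwx, hx⟩ := hdom w (hne w)
  rw [eq_of_adj_of_degree_eq_one (hG w) hwx hvw.symm, hv1] at hx
  exact absurd hx (by norm_num)

variable [DecidableEq V] (hiso : ∀ v, 0 < G.degree v)
include hiso

lemma isRkTDF_two_update_pendant {v p : V} (hv : 1 < G.degree v) (hvp : G.Adj v p)
    (hp : G.degree p = 1) : IsRkTDF G 2 (Function.update (fun _ => 2) p 1) := by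
  refine isRkTDF_two_iff.mpr ⟨fun u => ?_, fun u hu => ?_, fun u _ => ?_⟩
  · rw [Function.update_apply]; split <;> omega
  · rw [Function.update_apply] at hu; split at hu <;> omega
  obtain ⟨w, huw, hwp⟩ : ∃ w, G.Adj u w ∧ w ≠ p := by
    by_cases huv : u = v
    · exact huv ▸ exists_adj_ne_of_one_lt_degree hv p
    obtain ⟨w, huw⟩ := (G.degree_pos_iff_exists_adj u).mp (hiso u)
    exact ⟨w, huw, fun hwp => huv (eq_of_adj_of_degree_eq_one hp (hwp ▸ huw.symm) hvp.symm)⟩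
  exact ⟨w, huw, by simp [hwp]⟩

lemma isRkTDF_two_update_zero {v : V} (hv : 1 < G.degree v)
    (hN : ∀ u, G.Adj v u → 1 < G.degree u) :
    IsRkTDF G 2 (Function.update (fun _ => 2) v 0) := by
  refine isRkTDF_two_iff.mpr ⟨fun u => ?_, fun u hu => ?_, fun u _ => ?_⟩
  · rw [Function.update_apply]; split <;> omega
  · obtain rfl : u = v := by by_contra huv; simp [huv] at hu
    rw [G.ncard_adj_and_eq_degree fun w hw => by simp [hw.ne']]
    exact hv
  obtain ⟨w, huw⟩ := (G.degree_pos_iff_exists_adj u).mp (hiso u)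
  obtain ⟨w, huw, hwv⟩ : ∃ w, G.Adj u w ∧ w ≠ v := by
    by_cases hwv : w = v
    · exact exists_adj_ne_of_one_lt_degree (hN u (hwv ▸ huw.symm)) v
    · exact ⟨w, huw, hwv⟩
  exact ⟨w, huw, by simp [hwv]⟩

lemma exists_isRkTDF_two_update_lt_two {v : V} (hv : 1 < G.degree v) :
    ∃ p, ∃ a < 2, IsRkTDF G 2 (Function.update (fun _ => 2) p a) := by
  by_cases hpendant : ∃ p, G.Adj v p ∧ G.degree p = 1
  · obtain ⟨p, hvp, hp⟩ := hpendant
    exact ⟨p, 1, one_lt_two, isRkTDF_two_update_pendant hiso hv hvp hp⟩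
  push Not at hpendant
  refine ⟨v, 0, two_pos, isRkTDF_two_update_zero hiso hv fun u hu => ?_⟩
  have := hiso u
  have := hpendant u hu
  omega

end RomanDomination

theorem stmt4 {V : Type*} [Fintype V] [DecidableEq V] (G : SimpleGraph V)
    [DecidableRel G.Adj]
    (hiso : ∀ v : V, 0 < G.degree v) :
    romanKTDN G 2 = 2 * Fintype.card V ↔ G.IsRegularOfDegree 1 := by
  have hconst : IsRkTDF G 2 fun _ => 2 := isRkTDF_const_two fun v => hiso v
  constructor
  · intro h
    by_contra hreg
    obtain ⟨v, hv⟩ : ∃ v, 1 < G.degree v := by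
      obtain ⟨v, hv⟩ := not_forall.mp hreg
      exact ⟨v, lt_of_le_of_ne (hiso v) (Ne.symm hv)⟩
    obtain ⟨p, a, ha, hf⟩ := exists_isRkTDF_two_update_lt_two hiso hv
    exact (romanKTDN_lt_two_mul_card_of_update ha hf).ne h
  · intro hreg
    exact romanKTDN_eq_two_mul_card hconst fun f hf =>
      funext (hf.eq_two_of_isRegularOfDegree_one hreg)
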